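/- arXiv:2405.14469 — 2 statements merged into one kernel-verified Lean document; each statement's English description precedes it below -/
import Mathlib

section
/- Assume every h ∈ ℋ satisfies h(x) ∈ [0,b], let v(h) = E[(h(X) − E[h(X')])²], let λ : ℋ → (0, n/b), and define F_λ(h,X) = λ(h)Δ(h,X) − (λ(h)²/(1 − bλ(h)/n))·(v(h)/n). Then for every h ∈ ℋ, E[e^{2F_λ(h,X)}] ≤ 1. -/
/-!
With `t = 2λ/n` and `A = t²v/(2 - tb)`, the exponent `2F_λ(h, X)` is `∑ᵢ (t (E h - h(Xᵢ)) - A)`,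
so by independence `E[e^{2F_λ}]` is the `n`-th power of `E[e^{t (E h - h(X))}] e^{-A}`.
That factor is at most `1`: integrating the pointwise bound `eᵘ ≤ 1 + u + u²/(2 - c)` for
`u ≤ c < 2` against the centred variable `E h - h(X) ≤ b` gives `E[e^{t (E h - h(X))}] ≤ 1 + A ≤ eᴬ`.
-/

open MeasureTheory ProbabilityTheory

namespace Real

theorem exp_le_one_add_add_sq_div_two_of_nonpos {u : ℝ} (hu : u ≤ 0) :
    exp u ≤ 1 + u + u ^ 2 / 2 := by
  -- `(1 - w + w²/2)(1 + w + w²/2) = 1 + w⁴/4` with `w = -u`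
  have hpos : 0 < 1 + -u + (-u) ^ 2 / 2 := by nlinarith
  have h := quadratic_le_exp_of_nonneg (neg_nonneg.2 hu)
  rw [exp_neg, le_inv_comm₀ hpos (exp_pos u)] at h
  calc exp u ≤ (1 + -u + (-u) ^ 2 / 2)⁻¹ := h
    _ ≤ 1 + u + u ^ 2 / 2 := by
      rw [inv_le_iff_one_le_mul₀ hpos]
      nlinarith [pow_two_nonneg (u ^ 2)]

theorem exp_le_one_add_add_sq_div_two_sub {u c : ℝ} (hc : 0 ≤ c) (hc2 : c < 2) (hu : u ≤ c) :
    exp u ≤ 1 + u + u ^ 2 / (2 - c) := by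
  rcases le_total u 0 with hu0 | hu0
  · have : u ^ 2 / 2 ≤ u ^ 2 / (2 - c) := by gcongr; linarith
    linarith [exp_le_one_add_add_sq_div_two_of_nonpos hu0]
  · calc exp u ≤ (2 + u) / (2 - u) := exp_le_two_add_div_two_sub hu0 (hu.trans_lt hc2)
      _ = 1 + u + u ^ 2 / (2 - u) := by
        have : 2 - u ≠ 0 := by linarith
        field_simp
        ring
      _ ≤ 1 + u + u ^ 2 / (2 - c) := by gcongr

end Real

theorem ProbabilityTheory.mgf_le_exp_of_le {Ω : Type*} [MeasurableSpace Ω] {μ : Measure Ω}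
    [IsProbabilityMeasure μ] {X : Ω → ℝ} {c t : ℝ} (hX : MemLp X 2 μ) (hXc : ∀ᵐ ω ∂μ, X ω ≤ c)
    (hc : 0 ≤ c) (ht : 0 ≤ t) (htc : t * c < 2) :
    mgf X μ t ≤ Real.exp (t * ∫ ω, X ω ∂μ + t ^ 2 * (∫ ω, X ω ^ 2 ∂μ) / (2 - t * c)) := by
  have htX : ∀ᵐ ω ∂μ, t * X ω ≤ t * c := hXc.mono fun ω h ↦ by gcongr
  have hexp : Integrable (fun ω ↦ Real.exp (t * X ω)) μ := by
    refine (integrable_const (Real.exp (t * c))).mono' ?_ (htX.mono fun ω h ↦ ?_)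
    · exact Real.continuous_exp.comp_aestronglyMeasurable (hX.1.const_mul t)
    · rw [Real.norm_eq_abs, abs_of_pos (Real.exp_pos _)]
      exact Real.exp_le_exp.2 h
  have hX1 : Integrable X μ := hX.integrable one_le_two
  have hlin : Integrable (fun ω ↦ 1 + t * X ω) μ := (integrable_const 1).add (hX1.const_mul t)
  have hsq : Integrable (fun ω ↦ t ^ 2 / (2 - t * c) * X ω ^ 2) μ :=
    hX.integrable_sq.const_mul _
  calc mgf X μ t
      ≤ ∫ ω, (1 + t * X ω + t ^ 2 / (2 - t * c) * X ω ^ 2) ∂μ := by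
        refine integral_mono_ae hexp (hlin.add hsq) (htX.mono fun ω h ↦ ?_)
        exact (Real.exp_le_one_add_add_sq_div_two_sub (by positivity) htc h).trans_eq (by ring)
    _ = 1 + t * ∫ ω, X ω ∂μ + t ^ 2 * (∫ ω, X ω ^ 2 ∂μ) / (2 - t * c) := by
        rw [integral_add hlin hsq, integral_add (integrable_const 1) (hX1.const_mul t),
          integral_const_mul, integral_const_mul]
        simp only [integral_const, probReal_univ, smul_eq_mul, one_mul]
        ring
    _ ≤ _ := Real.add_one_le_exp _ |>.trans_eq' (by ring)

theorem ProbabilityTheory.mgf_integral_sub_le {Ω : Type*} [MeasurableSpace Ω] (μ : Measure Ω)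
    [IsProbabilityMeasure μ] {g : Ω → ℝ} {b t : ℝ} (hg : Measurable g)
    (hrange : ∀ y, g y ∈ Set.Icc 0 b) (ht : 0 ≤ t) (htb : t * b < 2) :
    mgf (fun y ↦ (∫ z, g z ∂μ) - g y) μ t
      ≤ Real.exp (t ^ 2 * (∫ y, (g y - ∫ z, g z ∂μ) ^ 2 ∂μ) / (2 - t * b)) := by
  set m := ∫ z, g z ∂μ
  have hg2 : MemLp g 2 μ := MemLp.of_bound hg.aestronglyMeasurable b <| ae_of_all _ fun y ↦ by
    rw [Real.norm_eq_abs, abs_of_nonneg (hrange y).1]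
    exact (hrange y).2
  have hmb : m ≤ b := by
    simpa using integral_mono (hg2.integrable one_le_two) (integrable_const b) fun y ↦ (hrange y).2
  have hb : 0 ≤ b := (integral_nonneg fun y ↦ (hrange y).1).trans hmb
  have hmean : ∫ y, (m - g y) ∂μ = 0 := by
    rw [integral_sub (integrable_const m) (hg2.integrable one_le_two)]
    simp [m]
  have hvar : ∫ y, (m - g y) ^ 2 ∂μ = ∫ y, (g y - m) ^ 2 ∂μ := by
    congr 1 with y
    ring
  simpa only [hmean, hvar, mul_zero, zero_add] using
    mgf_le_exp_of_le (X := fun y ↦ m - g y) ((memLp_const m).sub hg2)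
      (ae_of_all _ fun y ↦ by linarith [(hrange y).1]) hb ht htb

/-- Bernstein auxiliary lemma: for `g : 𝒳 → [0,b]`, `λ ∈ (0, n/b)`,
`v = E[(g(X) − E[g(X')])²]` and
`F_λ(X) = λ·Δ(g,X) − (λ²/(1 − bλ/n))·(v/n)`, one has `E[e^{2F_λ(X)}] ≤ 1`. -/
theorem stmt_12 {𝒳 : Type*} [MeasurableSpace 𝒳] (μ : Measure 𝒳) [IsProbabilityMeasure μ]
    (n : ℕ) (hn : 0 < n) (b : ℝ) (hb : 0 < b)
    (g : 𝒳 → ℝ) (hg : Measurable g) (hrange : ∀ y : 𝒳, g y ∈ Set.Icc 0 b)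
    (lam : ℝ) (hlam0 : 0 < lam) (hlam1 : lam < n / b) :
    ∫ x, Real.exp (2 * (lam * ((∫ y, g y ∂μ) - (1 / n) * ∑ i : Fin n, g (x i))
        - lam ^ 2 / (1 - b * lam / n)
          * ((∫ y, (g y - ∫ y', g y' ∂μ) ^ 2 ∂μ) / n)))
      ∂(Measure.pi fun _ : Fin n => μ) ≤ 1 := by
  set m := ∫ y, g y ∂μ
  set v := ∫ y, (g y - m) ^ 2 ∂μ
  set t := 2 * lam / n
  set A := t ^ 2 * v / (2 - t * b)
  have hn' : (n : ℝ) ≠ 0 := by positivity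
  have htb : t * b < 2 := by
    rw [lt_div_iff₀ hb] at hlam1
    calc t * b = 2 * (lam * b) / n := by ring
      _ < 2 := by rw [div_lt_iff₀ (by positivity)]; linarith
  have hfactor : ∀ x : Fin n → 𝒳, 2 * (lam * (m - (1 / n) * ∑ i : Fin n, g (x i))
      - lam ^ 2 / (1 - b * lam / n) * (v / n)) = ∑ i, (t * (m - g (x i)) - A) := by
    intro x
    rw [Finset.sum_sub_distrib, ← Finset.mul_sum, Finset.sum_sub_distrib]
    simp only [Finset.sum_const, Finset.card_univ, Fintype.card_fin, nsmul_eq_mul, A, t]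
    rw [show 2 - 2 * lam / n * b = 2 * (1 - b * lam / n) by ring]
    field_simp
  have hmgf : mgf (fun y ↦ m - g y) μ t ≤ Real.exp A :=
    mgf_integral_sub_le μ hg hrange (by positivity) htb
  calc _ = ∫ x, ∏ i, Real.exp (t * (m - g (x i)) - A) ∂(Measure.pi fun _ : Fin n => μ) := by
        simp_rw [hfactor, Real.exp_sum]
    _ = (mgf (fun y ↦ m - g y) μ t * Real.exp (-A)) ^ n := by
        rw [integral_fintype_prod_eq_pow (fun y ↦ Real.exp (t * (m - g y) - A)),
          Fintype.card_fin, mgf, ← integral_mul_const]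
        simp_rw [sub_eq_add_neg, Real.exp_add]
    _ ≤ 1 := by
        refine pow_le_one₀ (mul_nonneg mgf_nonneg (Real.exp_pos _).le) ?_
        calc _ ≤ Real.exp A * Real.exp (-A) := by gcongr
          _ = 1 := by rw [← Real.exp_add, add_neg_cancel, Real.exp_zero]
end

section
/- Let f : 𝒳ⁿ → ℝ satisfy the self-bounding condition Σ_{k=1}^n (f(x) − inf_{y∈𝒳} f(S_y^k x))² ≤ a·f(x) for all x ∈ 𝒳ⁿ and some a > 0. Then for all λ ∈ (0, 2/a) and X ~ μⁿ i.i.d., ln E[exp(λ(f(X) − E[f(X')]))] ≤ λ²a·E[f(X)]/(2 − aλ). -/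
/-!
The entropy method. A self-bounding `f` is bounded: moving one coordinate of `x` to a minimiser
gives `f x + a ≤ 2 (f x' + a)`, so all functions integrated below are bounded and measurable.

Entropy tensorizes: `ent (e^{tf})` under the product measure is at most the sum over `k` of the
expected entropy in the `k`-th coordinate alone. In that coordinate, with `z` the essential
infimum of `f`, the inequality `e^{-s} - 1 + s ≤ s² / 2` bounds the entropy by
`t² / 2 · E[(f - z)² e^{tf}]`. Since `⨅ ≤ z ≤ f` almost everywhere, the self-bounding property
bounds the sum by `a t² / 2 · E[f e^{tf}]`.

For the cumulant generating function `Λ` this is the Herbst inequality `t Λ' - Λ ≤ a t² / 2 · Λ'`: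
`Λ t · (1 / t - a / 2)` is nonincreasing, and tends to `Λ' 0 = E f` as `t → 0⁺`.
-/

open MeasureTheory ProbabilityTheory Real Set Filter Topology

section BoundedIntegrands

variable {Ω : Type*} [MeasurableSpace Ω] {ρ : Measure Ω}

lemma integrable_comp_of_mem_compact [IsFiniteMeasure ρ] {E : Type*} [TopologicalSpace E]
    [MeasurableSpace E] [OpensMeasurableSpace E] {φ : E → ℝ} (hφ : Continuous φ) {g : Ω → E}
    (hg : Measurable g) {K : Set E} (hK : IsCompact K) (hgK : ∀ ω, g ω ∈ K) :
    Integrable (fun ω => φ (g ω)) ρ := by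
  obtain ⟨M, hM⟩ := hK.exists_bound_of_continuousOn hφ.continuousOn
  exact .of_bound (hφ.measurable.comp hg).aestronglyMeasurable M
    (ae_of_all _ fun ω => hM _ (hgK ω))

lemma integral_mem_Icc [IsProbabilityMeasure ρ] {u : Ω → ℝ} (hu : Measurable u) {c C : ℝ}
    (huC : ∀ ω, u ω ∈ Icc c C) : ∫ ω, u ω ∂ρ ∈ Icc c C := by
  have hi : Integrable u ρ := .of_mem_Icc c C hu.aemeasurable (ae_of_all _ huC)
  constructor
  · simpa using integral_mono (integrable_const c) hi fun ω => (huC ω).1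
  · simpa using integral_mono hi (integrable_const C) fun ω => (huC ω).2

end BoundedIntegrands

lemma sub_le_mul_log_sub_mul_log {s t : ℝ} (hs : 0 ≤ s) (ht : 0 < t) :
    s - t ≤ s * log s - s * log t := by
  rcases hs.eq_or_lt with rfl | hs
  · simpa using ht.le
  · have h := mul_le_mul_of_nonneg_left (self_sub_one_le_mul_log (div_pos hs ht).le) ht.le
    rw [log_div hs.ne' ht.ne'] at h
    calc s - t = t * (s / t - 1) := by field_simp
      _ ≤ t * (s / t * (log s - log t)) := h
      _ = s * log s - s * log t := by field_simp

lemma exp_neg_le_one_sub_add_sq_div_two {s : ℝ} (hs : 0 ≤ s) :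
    exp (-s) ≤ 1 - s + s ^ 2 / 2 := by
  have hq : 0 ≤ 1 - s + s ^ 2 / 2 := by nlinarith [sq_nonneg (s - 1)]
  rw [exp_neg, inv_le_iff_one_le_mul₀' (exp_pos s)]
  nlinarith [mul_le_mul_of_nonneg_right (quadratic_le_exp_of_nonneg hs) hq, sq_nonneg (s ^ 2)]

section Entropy

variable {Ω A : Type*} [MeasurableSpace Ω] [MeasurableSpace A]

noncomputable def ent (ρ : Measure Ω) (u : Ω → ℝ) : ℝ :=
  ∫ ω, u ω * log (u ω) ∂ρ - (∫ ω, u ω ∂ρ) * log (∫ ω, u ω ∂ρ)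

variable {ρ : Measure Ω} [IsProbabilityMeasure ρ] {P : Measure A} [IsProbabilityMeasure P]
  {C : ℝ}

lemma integrable_ent_section {u : A × Ω → ℝ} (hu : Measurable u) (huC : ∀ p, u p ∈ Icc 0 C) :
    Integrable (fun θ => ent ρ fun ω => u (θ, ω)) P := by
  have hv : Measurable fun θ => ∫ ω, u (θ, ω) ∂ρ :=
    (hu.stronglyMeasurable.integral_prod_right' (ν := ρ)).measurable
  exact (integrable_comp_of_mem_compact continuous_mul_log hu isCompact_Icc huC).integral_prod_left
    |>.sub (integrable_comp_of_mem_compact continuous_mul_log hv isCompact_Icc fun θ =>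
      integral_mem_Icc (hu.comp measurable_prodMk_left) fun ω => huC _)

lemma ent_le_integral_mul_log_sub {u : Ω → ℝ} (hu : Measurable u) (huC : ∀ ω, u ω ∈ Icc 0 C)
    {c : ℝ} (hc : 0 < c) : ent ρ u ≤ ∫ ω, (u ω * log (u ω) - u ω * log c - u ω + c) ∂ρ := by
  have hul : Integrable (fun ω => u ω * log (u ω)) ρ :=
    integrable_comp_of_mem_compact continuous_mul_log hu isCompact_Icc huC
  have hui : Integrable u ρ := .of_mem_Icc 0 C hu.aemeasurable (ae_of_all _ huC)
  have hm := sub_le_mul_log_sub_mul_log (integral_mem_Icc (ρ := ρ) hu huC).1 hc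
  have h1 : Integrable (fun ω => u ω * log (u ω) - u ω * log c) ρ := hul.sub (hui.mul_const _)
  have h2 : Integrable (fun ω => u ω * log (u ω) - u ω * log c - u ω) ρ := h1.sub hui
  rw [integral_add h2 (integrable_const c), integral_sub h1 hui,
    integral_sub hul (hui.mul_const _), integral_mul_const, integral_const]
  simp only [probReal_univ, one_smul, ent]
  linarith

lemma ent_exp_mul_le_of_ae_le {g : Ω → ℝ} (hg : Measurable g) {c C : ℝ}
    (hgC : ∀ ω, g ω ∈ Icc c C) {t z : ℝ} (ht : 0 ≤ t) (hz : ∀ᵐ ω ∂ρ, z ≤ g ω) :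
    ent ρ (fun ω => exp (t * g ω)) ≤ t ^ 2 / 2 * ∫ ω, (g ω - z) ^ 2 * exp (t * g ω) ∂ρ := by
  have hu : ∀ ω, exp (t * g ω) ∈ Icc 0 (exp (t * C)) := fun ω =>
    ⟨(exp_pos _).le, exp_le_exp.2 (mul_le_mul_of_nonneg_left (hgC ω).2 ht)⟩
  refine (ent_le_integral_mul_log_sub (hg.const_mul t).exp hu (exp_pos (t * z))).trans ?_
  simp only [log_exp]
  rw [← integral_const_mul]
  refine integral_mono_ae
    (integrable_comp_of_mem_compact (φ := fun x => exp (t * x) * (t * x) - exp (t * x) * (t * z)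
      - exp (t * x) + exp (t * z)) (by fun_prop) hg isCompact_Icc hgC)
    (integrable_comp_of_mem_compact (φ := fun x => t ^ 2 / 2 * ((x - z) ^ 2 * exp (t * x)))
      (by fun_prop) hg isCompact_Icc hgC) ?_
  filter_upwards [hz] with ω hω
  have hs : 0 ≤ t * (g ω - z) := mul_nonneg ht (sub_nonneg.2 hω)
  have hexp : exp (t * z) = exp (t * g ω) * exp (-(t * (g ω - z))) := by
    rw [← exp_add]
    ring_nf
  rw [hexp]
  nlinarith [mul_le_mul_of_nonneg_left (exp_neg_le_one_sub_add_sq_div_two hs)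
    (exp_pos (t * g ω)).le]

lemma integral_mul_le_ent {u h : Ω → ℝ} (hu : Measurable u) (huC : ∀ ω, u ω ∈ Icc 1 C)
    (hh : Measurable h) {c D : ℝ} (hhD : ∀ ω, h ω ∈ Icc c D) (heh : ∫ ω, exp (h ω) ∂ρ ≤ 1) :
    ∫ ω, u ω * h ω ∂ρ ≤ ent ρ u := by
  have huC' : ∀ ω, u ω ∈ Icc 0 C := fun ω => Icc_subset_Icc zero_le_one le_rfl (huC ω)
  have hul : Integrable (fun ω => u ω * log (u ω)) ρ :=
    integrable_comp_of_mem_compact continuous_mul_log hu isCompact_Icc huC'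
  have hui : Integrable u ρ := .of_mem_Icc 0 C hu.aemeasurable (ae_of_all _ huC')
  have hexp : Integrable (fun ω => exp (h ω)) ρ :=
    integrable_comp_of_mem_compact continuous_exp hh isCompact_Icc hhD
  have huh : Integrable (fun ω => u ω * h ω) ρ :=
    integrable_comp_of_mem_compact (φ := fun p : ℝ × ℝ => p.1 * p.2) (by fun_prop)
      (hu.prodMk hh) (isCompact_Icc.prod isCompact_Icc) fun ω => ⟨huC' ω, hhD ω⟩
  set m := ∫ ω, u ω ∂ρ
  have hm : 0 < m := zero_lt_one.trans_le (integral_mem_Icc hu huC).1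
  -- the Fenchel-Young inequality for `x log x`, with `m e^h` in the role of the dual variable
  have hyoung : ∀ ω, u ω * h ω ≤ u ω * log (u ω) - (log m + 1) * u ω + m * exp (h ω) := by
    intro ω
    have := sub_le_mul_log_sub_mul_log (huC' ω).1 (mul_pos hm (exp_pos (h ω)))
    rw [log_mul hm.ne' (exp_pos _).ne', log_exp] at this
    linarith
  have h1 : Integrable (fun ω => u ω * log (u ω) - (log m + 1) * u ω) ρ :=
    hul.sub (hui.const_mul _)
  have h2 : Integrable (fun ω => u ω * log (u ω) - (log m + 1) * u ω + m * exp (h ω)) ρ :=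
    h1.add (hexp.const_mul m)
  have := integral_mono huh h2 hyoung
  rw [integral_add h1 (hexp.const_mul m), integral_sub hul (hui.const_mul _),
    integral_const_mul, integral_const_mul] at this
  unfold ent
  nlinarith

lemma ent_prod_eq {u : A × Ω → ℝ} (hu : Measurable u) (huC : ∀ p, u p ∈ Icc 0 C) :
    ent (P.prod ρ) u =
      ∫ ω, ent P (fun θ => u (θ, ω)) ∂ρ + ent ρ (fun ω => ∫ θ, u (θ, ω) ∂P) := by
  have hul : Integrable (fun p => u p * log (u p)) (P.prod ρ) :=
    integrable_comp_of_mem_compact continuous_mul_log hu isCompact_Icc huC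
  have hui : Integrable u (P.prod ρ) := .of_mem_Icc 0 C hu.aemeasurable (ae_of_all _ huC)
  have hv : Measurable fun ω => ∫ θ, u (θ, ω) ∂P :=
    (hu.stronglyMeasurable.integral_prod_left' (μ := P)).measurable
  have hvl : Integrable (fun ω => (∫ θ, u (θ, ω) ∂P) * log (∫ θ, u (θ, ω) ∂P)) ρ :=
    integrable_comp_of_mem_compact continuous_mul_log hv isCompact_Icc fun ω =>
      integral_mem_Icc (hu.comp measurable_prodMk_right) fun θ => huC _
  simp only [ent]
  rw [integral_prod_symm _ hul, integral_prod_symm _ hui,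
    integral_sub hul.integral_prod_right hvl]
  ring

lemma ent_integral_le_integral_ent {u : A × Ω → ℝ} (hu : Measurable u)
    (huC : ∀ p, u p ∈ Icc 1 C) :
    ent ρ (fun ω => ∫ θ, u (θ, ω) ∂P) ≤ ∫ θ, ent ρ (fun ω => u (θ, ω)) ∂P := by
  set v := fun ω => ∫ θ, u (θ, ω) ∂P
  have hv : Measurable v := (hu.stronglyMeasurable.integral_prod_left' (μ := P)).measurable
  have hvC : ∀ ω, v ω ∈ Icc 1 C := fun ω =>
    integral_mem_Icc (hu.comp measurable_prodMk_right) fun θ => huC _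
  set m := ∫ ω, v ω ∂ρ
  have hmC : m ∈ Icc 1 C := integral_mem_Icc hv hvC
  have hm : 0 < m := zero_lt_one.trans_le hmC.1
  have hlog : ∀ x ∈ Icc 1 C, log x ∈ Icc 0 (log C) := fun x hx =>
    ⟨log_nonneg hx.1, log_le_log (zero_lt_one.trans_le hx.1) hx.2⟩
  -- `h = log (v / m)` is the dual witness: `∫ exp h = 1` and `ent ρ v = ∫ v h`
  set h := fun ω => log (v ω) - log m
  have hh : Measurable h := (measurable_log.comp hv).sub_const _
  have hhD : ∀ ω, h ω ∈ Icc (-log C) (log C) := fun ω => by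
    obtain ⟨h1, h2⟩ := hlog _ (hvC ω)
    obtain ⟨h3, h4⟩ := hlog _ hmC
    exact ⟨by linarith, by linarith⟩
  have heh : ∫ ω, exp (h ω) ∂ρ = 1 := by
    have : ∀ ω, exp (h ω) = v ω / m := fun ω => by
      rw [exp_sub, exp_log (zero_lt_one.trans_le (hvC ω).1), exp_log hm]
    simp only [this, integral_div]
    exact div_self hm.ne'
  have hent : ent ρ v = ∫ ω, v ω * h ω ∂ρ := by
    have hvi : Integrable v ρ := .of_mem_Icc 1 C hv.aemeasurable (ae_of_all _ hvC)
    have hvl : Integrable (fun ω => v ω * log (v ω)) ρ :=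
      integrable_comp_of_mem_compact continuous_mul_log hv isCompact_Icc fun ω =>
        Icc_subset_Icc zero_le_one le_rfl (hvC ω)
    simp only [ent, h, mul_sub, integral_sub hvl (hvi.mul_const _), integral_mul_const]
    rfl
  have huh : Integrable (fun q : Ω × A => u (q.2, q.1) * h q.1) (ρ.prod P) :=
    integrable_comp_of_mem_compact (φ := fun p : ℝ × ℝ => p.1 * p.2) (by fun_prop)
      ((hu.comp measurable_swap).prodMk (hh.comp measurable_fst))
      (isCompact_Icc.prod isCompact_Icc) fun q => ⟨huC _, hhD _⟩
  calc ent ρ v = ∫ ω, ∫ θ, u (θ, ω) * h ω ∂P ∂ρ := by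
        simp only [hent, v, integral_mul_const]
    _ = ∫ θ, ∫ ω, u (θ, ω) * h ω ∂ρ ∂P := integral_integral_swap huh
    _ ≤ ∫ θ, ent ρ (fun ω => u (θ, ω)) ∂P :=
        integral_mono huh.integral_prod_right
          (integrable_ent_section hu fun p => Icc_subset_Icc zero_le_one le_rfl (huC p))
          fun θ => integral_mul_le_ent (hu.comp measurable_prodMk_left) (fun ω => huC _) hh hhD
            heh.le

lemma ent_prod_le {u : A × Ω → ℝ} (hu : Measurable u) (huC : ∀ p, u p ∈ Icc 1 C) :
    ent (P.prod ρ) u ≤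
      ∫ ω, ent P (fun θ => u (θ, ω)) ∂ρ + ∫ θ, ent ρ (fun ω => u (θ, ω)) ∂P := by
  rw [ent_prod_eq (P := P) (ρ := ρ) hu fun p => Icc_subset_Icc zero_le_one le_rfl (huC p)]
  exact add_le_add le_rfl (ent_integral_le_integral_ent hu huC)

end Entropy

section ProductMeasure

variable {𝒳 : Type*} [MeasurableSpace 𝒳]

lemma measurable_finCons {n : ℕ} :
    Measurable fun p : 𝒳 × (Fin n → 𝒳) => (Fin.cons p.1 p.2 : Fin (n + 1) → 𝒳) :=
  measurable_pi_iff.2 fun i => Fin.cases (by simpa using measurable_fst)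
    (fun j => (measurable_pi_apply j).comp measurable_snd) i

lemma integral_pi_fin_succ {n : ℕ} (μ : Fin (n + 1) → Measure 𝒳) [∀ i, SigmaFinite (μ i)]
    (F : (Fin (n + 1) → 𝒳) → ℝ) :
    ∫ x, F x ∂Measure.pi μ =
      ∫ p, F (Fin.cons p.1 p.2) ∂(μ 0).prod (Measure.pi fun j => μ j.succ) := by
  rw [← (measurePreserving_piFinSuccAbove μ 0).symm.integral_comp']
  simp [MeasurableEquiv.piFinSuccAbove_symm_apply, Fin.insertNthEquiv, Fin.insertNth_zero']

lemma integral_pi_fin_succ_update_zero {n : ℕ} (μ : Fin (n + 1) → Measure 𝒳)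
    [∀ i, IsProbabilityMeasure (μ i)] (Y : (Fin (n + 1) → 𝒳) → ℝ) (g : (𝒳 → ℝ) → ℝ) :
    ∫ x, g (fun y => Y (Function.update x 0 y)) ∂Measure.pi μ =
      ∫ w, g (fun y => Y (Fin.cons y w)) ∂Measure.pi fun j => μ j.succ := by
  rw [integral_pi_fin_succ]
  simp only [Fin.update_cons_zero]
  exact (integral_fun_snd fun w => g fun y => Y (Fin.cons y w)).trans (by simp)

lemma measurePreserving_update {ι : Type*} [Fintype ι] [DecidableEq ι] (μ : ι → Measure 𝒳)
    [∀ i, IsProbabilityMeasure (μ i)] (k : ι) :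
    MeasurePreserving (fun p : (ι → 𝒳) × 𝒳 => Function.update p.1 k p.2)
      ((Measure.pi μ).prod (μ k)) (Measure.pi μ) := by
  refine ⟨measurable_update', (Measure.pi_eq fun s hs => ?_).symm⟩
  rw [Measure.map_apply measurable_update' (MeasurableSet.univ_pi hs)]
  have : (fun p : (ι → 𝒳) × 𝒳 => Function.update p.1 k p.2) ⁻¹' univ.pi s =
      univ.pi (Function.update s k univ) ×ˢ s k := by
    ext ⟨x, y⟩
    simp only [mem_preimage, mem_univ_pi, mem_prod]
    constructor
    · intro h
      refine ⟨fun i => ?_, by simpa using h k⟩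
      rcases eq_or_ne i k with rfl | hi
      · simp
      · simpa [hi] using h i
    · rintro ⟨h, hk⟩ i
      rcases eq_or_ne i k with rfl | hi
      · simpa using hk
      · simpa [hi] using h i
  rw [this, Measure.prod_prod, Measure.pi_pi, ← Finset.mul_prod_erase _ _ (Finset.mem_univ k),
    ← Finset.mul_prod_erase _ _ (Finset.mem_univ k), Function.update_self, measure_univ,
    one_mul, mul_comm]
  congr 1
  exact Finset.prod_congr rfl fun i hi => by
    rw [Function.update_of_ne (Finset.ne_of_mem_erase hi)]

lemma integral_integral_update {ι : Type*} [Fintype ι] [DecidableEq ι] (μ : ι → Measure 𝒳)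
    [∀ i, IsProbabilityMeasure (μ i)] {G : (ι → 𝒳) → ℝ} (hG : Integrable G (Measure.pi μ))
    (k : ι) : ∫ x, ∫ y, G (Function.update x k y) ∂μ k ∂Measure.pi μ = ∫ x, G x ∂Measure.pi μ := by
  have hmp := measurePreserving_update μ k
  calc ∫ x, ∫ y, G (Function.update x k y) ∂μ k ∂Measure.pi μ
      = ∫ p, G (Function.update p.1 k p.2) ∂(Measure.pi μ).prod (μ k) :=
        (integral_prod _ ((hmp.integrable_comp hG.aestronglyMeasurable).2 hG)).symm
    _ = ∫ x, G x ∂Measure.pi μ := by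
        rw [← integral_map hmp.measurable.aemeasurable
          (by rw [hmp.map_eq]; exact hG.aestronglyMeasurable), hmp.map_eq]

theorem ent_pi_le_sum_integral_ent {n : ℕ} (μ : Fin n → Measure 𝒳)
    [∀ i, IsProbabilityMeasure (μ i)] {Y : (Fin n → 𝒳) → ℝ} (hY : Measurable Y) {C : ℝ}
    (hYC : ∀ x, Y x ∈ Icc 1 C) :
    ent (Measure.pi μ) Y ≤
      ∑ k, ∫ x, ent (μ k) (fun y => Y (Function.update x k y)) ∂Measure.pi μ := by
  induction n with
  | zero => simp [ent, integral_unique]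
  | succ n ih =>
    set ν := Measure.pi fun j : Fin n => μ j.succ
    have hu : Measurable fun p : 𝒳 × (Fin n → 𝒳) => Y (Fin.cons p.1 p.2) :=
      hY.comp measurable_finCons
    have hent : ∀ k : Fin n, Integrable (fun q : 𝒳 × (Fin n → 𝒳) =>
        ent (μ k.succ) fun y => Y (Fin.cons q.1 (Function.update q.2 k y))) ((μ 0).prod ν) :=
      fun k => integrable_ent_section (hY.comp (measurable_finCons.comp
        ((measurable_fst.comp measurable_fst).prodMk
          (measurable_update'.comp ((measurable_snd.comp measurable_fst).prodMk measurable_snd)))))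
        fun _ => Icc_subset_Icc zero_le_one le_rfl (hYC _)
    have hsucc : ∀ k : Fin n,
        ∫ x, ent (μ k.succ) (fun y => Y (Function.update x k.succ y)) ∂Measure.pi μ =
          ∫ c, ∫ w, ent (μ k.succ) (fun y => Y (Fin.cons c (Function.update w k y))) ∂ν ∂μ 0 := by
      intro k
      rw [integral_pi_fin_succ, ← integral_prod _ (hent k)]
      simp only [Fin.cons_update]
      rfl
    calc ent (Measure.pi μ) Y = ent ((μ 0).prod ν) fun p => Y (Fin.cons p.1 p.2) := by
          simp only [ent, integral_pi_fin_succ]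
          rfl
      _ ≤ ∫ w, ent (μ 0) (fun c => Y (Fin.cons c w)) ∂ν +
            ∫ c, ent ν (fun w => Y (Fin.cons c w)) ∂μ 0 := ent_prod_le hu fun _ => hYC _
      _ ≤ ∫ w, ent (μ 0) (fun c => Y (Fin.cons c w)) ∂ν + ∫ c, ∑ k,
            ∫ w, ent (μ k.succ) (fun y => Y (Fin.cons c (Function.update w k y))) ∂ν ∂μ 0 := by
          refine add_le_add le_rfl (integral_mono
            (integrable_ent_section hu fun _ => Icc_subset_Icc zero_le_one le_rfl (hYC _))
            (integrable_finsetSum _ fun k _ => (hent k).integral_prod_left) fun c => ?_)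
          exact ih _ (hY.comp (measurable_finCons.comp (measurable_const.prodMk measurable_id)))
            fun _ => hYC _
      _ = ∑ k, ∫ x, ent (μ k) (fun y => Y (Function.update x k y)) ∂Measure.pi μ := by
          rw [Fin.sum_univ_succ, integral_pi_fin_succ_update_zero,
            integral_finsetSum _ fun k _ => (hent k).integral_prod_left]
          simp only [hsucc]
          rfl

end ProductMeasure

lemma measurable_essInf_section {α Ω : Type*} [MeasurableSpace α] [MeasurableSpace Ω]
    {ν : Measure Ω} [IsProbabilityMeasure ν] {F : α × Ω → ℝ} (hF : Measurable F) {c C : ℝ}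
    (hFC : ∀ p, F p ∈ Icc c C) : Measurable fun x => essInf (fun ω => F (x, ω)) ν := by
  refine measurable_of_Iio fun q => ?_
  have hset : (fun x => essInf (fun ω => F (x, ω)) ν) ⁻¹' Iio q =
      ⋃ r : ℚ, ⋃ _ : (r : ℝ) < q, {x | ν {ω | F (x, ω) < r} ≠ 0} := by
    ext x
    simp only [mem_preimage, mem_Iio, mem_iUnion, mem_ofPred_eq, exists_prop]
    constructor
    · intro hx
      obtain ⟨r, hxr, hrq⟩ := exists_rat_btwn hx
      refine ⟨r, hrq, fun h0 => hxr.not_ge (le_essInf_of_ae_le _ ?_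
        (isBoundedUnder_of ⟨C, fun ω => (hFC _).2⟩).isCoboundedUnder_flip)⟩
      rw [EventuallyLE, ae_iff]
      simpa [not_le] using h0
    · rintro ⟨r, hrq, hr⟩
      by_contra! hq
      refine hr (measure_mono_null (fun ω hω => ?_)
        (ae_iff.1 (ae_essInf_le (isBoundedUnder_of ⟨c, fun ω => (hFC (x, ω)).1⟩))))
      simp only [mem_ofPred_eq] at hω ⊢
      linarith
  rw [hset]
  exact .iUnion fun r => .iUnion fun _ => (measurable_measure_prodMk_left
    (measurableSet_lt hF measurable_const) (measurableSet_singleton 0)).compl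

section SelfBounding

variable {ι 𝒳 : Type*} [DecidableEq ι]

def SelfBounding [Fintype ι] (f : (ι → 𝒳) → ℝ) (a : ℝ) : Prop :=
  ∀ x, ∑ k, (f x - ⨅ y, f (Function.update x k y)) ^ 2 ≤ a * f x

lemma add_le_two_mul_add_of_sq_sub_le {F G a : ℝ} (hG : 0 ≤ G) (ha : 0 ≤ a)
    (h : (F - G) ^ 2 ≤ a * F) : F + a ≤ 2 * (G + a) := by
  nlinarith [sq_nonneg G, mul_nonneg hG ha]

namespace SelfBounding

variable [Fintype ι] {f : (ι → 𝒳) → ℝ} {a : ℝ}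

lemma add_le_two_pow_mul (hsb : SelfBounding f a) (hf : ∀ x, 0 ≤ f x) (ha : 0 ≤ a)
    (x x₀ : ι → 𝒳) : f x + a ≤ 2 ^ Fintype.card ι * (f x₀ + a) := by
  suffices h : ∀ s : Finset ι, ∀ x : ι → 𝒳, (∀ i ∉ s, x i = x₀ i) →
      f x + a ≤ 2 ^ s.card * (f x₀ + a) from
    h Finset.univ x fun i hi => absurd (Finset.mem_univ i) hi
  intro s
  induction s using Finset.induction_on with
  | empty =>
    intro x hx
    obtain rfl : x = x₀ := funext fun i => hx i (Finset.notMem_empty i)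
    simp
  | insert k s hk ih =>
    intro x hx
    have hstep : f x + a ≤ 2 * ((⨅ y, f (Function.update x k y)) + a) :=
      add_le_two_mul_add_of_sq_sub_le (Real.iInf_nonneg fun y => hf _) ha
        ((Finset.single_le_sum (f := fun k => (f x - ⨅ y, f (Function.update x k y)) ^ 2)
          (fun k _ => sq_nonneg _) (Finset.mem_univ k)).trans (hsb x))
    have hinf : ⨅ y, f (Function.update x k y) ≤ f (Function.update x k (x₀ k)) :=
      ciInf_le ⟨0, by rintro _ ⟨y, rfl⟩; exact hf _⟩ _
    have hx' := ih (Function.update x k (x₀ k)) fun i hi => by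
      rcases eq_or_ne i k with rfl | hik
      · simp
      · rw [Function.update_of_ne hik]
        exact hx i (by simp [hik, hi])
    rw [Finset.card_insert_of_notMem hk, pow_succ]
    nlinarith

lemma bddAbove_range [Nonempty (ι → 𝒳)] (hsb : SelfBounding f a) (hf : ∀ x, 0 ≤ f x)
    (ha : 0 ≤ a) : BddAbove (Set.range f) := by
  obtain ⟨x₀⟩ := ‹Nonempty (ι → 𝒳)›
  exact ⟨2 ^ Fintype.card ι * (f x₀ + a), by
    rintro _ ⟨x, rfl⟩
    linarith [hsb.add_le_two_pow_mul hf ha x x₀]⟩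

end SelfBounding

variable [MeasurableSpace 𝒳]

/-- The pointwise infimum `⨅ y, f (update x k y)` need not be measurable in `x`; this essential
version is, and it still lies between that infimum and `f` almost everywhere. -/
noncomputable def essInfUpdate (ν : Measure 𝒳) (f : (ι → 𝒳) → ℝ) (k : ι) (x : ι → 𝒳) : ℝ :=
  essInf (fun y => f (Function.update x k y)) ν

section EssInfUpdate

variable {ν : Measure 𝒳} {f : (ι → 𝒳) → ℝ} {B : ℝ}

lemma measurable_essInfUpdate [IsProbabilityMeasure ν] (hf : Measurable f)
    (hfB : ∀ x, f x ∈ Icc 0 B) (k : ι) : Measurable (essInfUpdate ν f k) :=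
  measurable_essInf_section (F := fun p : (ι → 𝒳) × 𝒳 => f (Function.update p.1 k p.2))
    (hf.comp measurable_update') fun _ => hfB _

lemma ae_essInfUpdate_le (hf : ∀ x, 0 ≤ f x) (k : ι) (x : ι → 𝒳) :
    ∀ᵐ y ∂ν, essInfUpdate ν f k x ≤ f (Function.update x k y) :=
  ae_essInf_le (isBoundedUnder_of ⟨0, fun _ => hf _⟩)

lemma iInf_le_essInfUpdate [IsProbabilityMeasure ν] (hfB : ∀ x, f x ∈ Icc 0 B) (k : ι)
    (x : ι → 𝒳) : ⨅ y, f (Function.update x k y) ≤ essInfUpdate ν f k x :=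
  le_essInf_of_ae_le _
    (ae_of_all _ fun y => ciInf_le ⟨0, by rintro _ ⟨y, rfl⟩; exact (hfB _).1⟩ y)
    (isBoundedUnder_of ⟨B, fun _ => (hfB _).2⟩).isCoboundedUnder_flip

lemma essInfUpdate_mem_Icc [IsProbabilityMeasure ν] (hfB : ∀ x, f x ∈ Icc 0 B) (k : ι)
    (x : ι → 𝒳) : essInfUpdate ν f k x ∈ Icc 0 B := by
  obtain ⟨y, hy⟩ := (ae_essInfUpdate_le (ν := ν) (fun x => (hfB x).1) k x).exists
  exact ⟨(Real.iInf_nonneg fun y => (hfB _).1).trans (iInf_le_essInfUpdate hfB k x),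
    hy.trans (hfB _).2⟩

lemma essInfUpdate_update (k : ι) (x : ι → 𝒳) (y : 𝒳) :
    essInfUpdate ν f k (Function.update x k y) = essInfUpdate ν f k x := by
  simp [essInfUpdate]

variable [Fintype ι] (μ : ι → Measure 𝒳) [∀ i, IsProbabilityMeasure (μ i)]

lemma ae_essInfUpdate_le_self (hf : Measurable f) (hfB : ∀ x, f x ∈ Icc 0 B) (k : ι) :
    ∀ᵐ x ∂Measure.pi μ, essInfUpdate (μ k) f k x ≤ f x := by
  have hmp := measurePreserving_update μ k
  have hw := measurable_essInfUpdate (ν := μ k) hf hfB k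
  rw [← hmp.map_eq, ae_map_iff hmp.measurable.aemeasurable (measurableSet_le hw hf)]
  simp only [essInfUpdate_update]
  refine (Measure.ae_prod_iff_ae_ae ?_).2
    (ae_of_all _ fun x => ae_essInfUpdate_le (hfB · |>.1) k x)
  exact measurableSet_le (hw.comp measurable_fst) (hf.comp measurable_update')

lemma integrable_sq_sub_essInfUpdate_mul_exp (hf : Measurable f) (hfB : ∀ x, f x ∈ Icc 0 B)
    (t : ℝ) (k : ι) :
    Integrable (fun x => (f x - essInfUpdate (μ k) f k x) ^ 2 * exp (t * f x)) (Measure.pi μ) :=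
  integrable_comp_of_mem_compact (φ := fun p : ℝ × ℝ => (p.1 - p.2) ^ 2 * exp (t * p.1))
    (by fun_prop) (hf.prodMk (measurable_essInfUpdate hf hfB k))
    (isCompact_Icc.prod isCompact_Icc) fun x => ⟨hfB x, essInfUpdate_mem_Icc hfB k x⟩

lemma integral_ent_exp_update_le (hf : Measurable f) (hfB : ∀ x, f x ∈ Icc 0 B) {t : ℝ}
    (ht : 0 ≤ t) (k : ι) :
    ∫ x, ent (μ k) (fun y => exp (t * f (Function.update x k y))) ∂Measure.pi μ ≤
      t ^ 2 / 2 * ∫ x, (f x - essInfUpdate (μ k) f k x) ^ 2 * exp (t * f x) ∂Measure.pi μ := by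
  set w := essInfUpdate (μ k) f k
  have hG := integrable_sq_sub_essInfUpdate_mul_exp μ hf hfB t k
  have hGu : Integrable (fun p : (ι → 𝒳) × 𝒳 =>
      (f (Function.update p.1 k p.2) - w (Function.update p.1 k p.2)) ^ 2 *
        exp (t * f (Function.update p.1 k p.2))) ((Measure.pi μ).prod (μ k)) :=
    ((measurePreserving_update μ k).integrable_comp hG.aestronglyMeasurable).2 hG
  calc ∫ x, ent (μ k) (fun y => exp (t * f (Function.update x k y))) ∂Measure.pi μ
      ≤ ∫ x, t ^ 2 / 2 * ∫ y, (f (Function.update x k y) - w (Function.update x k y)) ^ 2 *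
          exp (t * f (Function.update x k y)) ∂μ k ∂Measure.pi μ := by
        refine integral_mono (integrable_ent_section
          ((hf.comp measurable_update').const_mul t).exp fun p =>
            ⟨(exp_pos _).le, exp_le_exp.2 (mul_le_mul_of_nonneg_left (hfB _).2 ht)⟩)
          (hGu.integral_prod_left.const_mul _) fun x => ?_
        simp only [w, essInfUpdate_update]
        exact ent_exp_mul_le_of_ae_le (hf.comp (measurable_update x)) (fun y => hfB _) ht
          (ae_essInfUpdate_le (fun x => (hfB x).1) k x)
    _ = t ^ 2 / 2 * ∫ x, (f x - w x) ^ 2 * exp (t * f x) ∂Measure.pi μ := by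
        rw [integral_const_mul, integral_integral_update μ hG k]

lemma SelfBounding.ae_sum_sq_sub_essInfUpdate_le {a : ℝ} (hsb : SelfBounding f a)
    (hf : Measurable f) (hfB : ∀ x, f x ∈ Icc 0 B) :
    ∀ᵐ x ∂Measure.pi μ, ∑ k, (f x - essInfUpdate (μ k) f k x) ^ 2 ≤ a * f x := by
  filter_upwards [ae_all_iff.2 fun k => ae_essInfUpdate_le_self μ hf hfB k] with x hx
  refine (Finset.sum_le_sum fun k _ => ?_).trans (hsb x)
  exact pow_le_pow_left₀ (sub_nonneg.2 (hx k))
    (sub_le_sub_left (iInf_le_essInfUpdate hfB k x) _) 2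

end EssInfUpdate

end SelfBounding

theorem SelfBounding.ent_exp_mul_le {𝒳 : Type*} [MeasurableSpace 𝒳] {n : ℕ}
    (μ : Fin n → Measure 𝒳) [∀ i, IsProbabilityMeasure (μ i)] {f : (Fin n → 𝒳) → ℝ} {a B : ℝ}
    (hsb : SelfBounding f a) (hf : Measurable f) (hfB : ∀ x, f x ∈ Icc 0 B) {t : ℝ}
    (ht : 0 ≤ t) :
    ent (Measure.pi μ) (fun x => exp (t * f x)) ≤
      a * t ^ 2 / 2 * ∫ x, f x * exp (t * f x) ∂Measure.pi μ := by
  have hG := integrable_sq_sub_essInfUpdate_mul_exp μ hf hfB t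
  calc ent (Measure.pi μ) (fun x => exp (t * f x))
      ≤ ∑ k, ∫ x, ent (μ k) (fun y => exp (t * f (Function.update x k y))) ∂Measure.pi μ :=
        ent_pi_le_sum_integral_ent μ (hf.const_mul t).exp fun x =>
          ⟨one_le_exp (mul_nonneg ht (hfB x).1),
            exp_le_exp.2 (mul_le_mul_of_nonneg_left (hfB x).2 ht)⟩
    _ ≤ ∑ k, t ^ 2 / 2 * ∫ x, (f x - essInfUpdate (μ k) f k x) ^ 2 * exp (t * f x)
          ∂Measure.pi μ :=
        Finset.sum_le_sum fun k _ => integral_ent_exp_update_le μ hf hfB ht k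
    _ = t ^ 2 / 2 * ∫ x, ∑ k, (f x - essInfUpdate (μ k) f k x) ^ 2 * exp (t * f x)
          ∂Measure.pi μ := by
        rw [← Finset.mul_sum, integral_finsetSum _ fun k _ => hG k]
    _ ≤ t ^ 2 / 2 * ∫ x, a * f x * exp (t * f x) ∂Measure.pi μ := by
        refine mul_le_mul_of_nonneg_left (integral_mono_ae (integrable_finsetSum _ fun k _ => hG k)
          (integrable_comp_of_mem_compact (φ := fun y => a * y * exp (t * y)) (by fun_prop) hf
            isCompact_Icc hfB) ?_) (by positivity)
        filter_upwards [hsb.ae_sum_sq_sub_essInfUpdate_le μ hf hfB] with x hx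
        rw [← Finset.sum_mul]
        exact mul_le_mul_of_nonneg_right hx (exp_pos _).le
    _ = a * t ^ 2 / 2 * ∫ x, f x * exp (t * f x) ∂Measure.pi μ := by
        simp only [mul_assoc, integral_const_mul]
        ring

lemma herbst_mul_inv_sub_le_deriv_zero {Λ Λ' : ℝ → ℝ} {a s : ℝ} (hs : 0 < s)
    (hΛ : ∀ t ∈ Icc 0 s, HasDerivAt Λ (Λ' t) t) (hΛ0 : Λ 0 = 0)
    (hode : ∀ t ∈ Ioo 0 s, t * Λ' t - Λ t ≤ a * t ^ 2 / 2 * Λ' t) :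
    Λ s * (s⁻¹ - a / 2) ≤ Λ' 0 := by
  set H := fun t => Λ t * (t⁻¹ - a / 2)
  have hH : ∀ t ∈ Ioc 0 s, HasDerivAt H (Λ' t * (t⁻¹ - a / 2) + Λ t * -(t ^ 2)⁻¹) t :=
    fun t ht => (hΛ t (Ioc_subset_Icc_self ht)).mul ((hasDerivAt_inv ht.1.ne').sub_const (a / 2))
  have hanti : AntitoneOn H (Ioc 0 s) := by
    refine antitoneOn_of_deriv_nonpos (convex_Ioc 0 s)
      (fun t ht => (hH t ht).continuousAt.continuousWithinAt) ?_ ?_ <;> rw [interior_Ioc]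
    · exact fun t ht => (hH t (Ioo_subset_Ioc_self ht)).differentiableAt.differentiableWithinAt
    · intro t ht
      rw [(hH t (Ioo_subset_Ioc_self ht)).deriv]
      have h := hode t ht
      have ht0 := ht.1
      calc Λ' t * (t⁻¹ - a / 2) + Λ t * -(t ^ 2)⁻¹
          = (t * Λ' t - Λ t - a * t ^ 2 / 2 * Λ' t) / t ^ 2 := by field_simp; ring
        _ ≤ 0 := div_nonpos_of_nonpos_of_nonneg (by linarith) (sq_nonneg t)
  -- `H t = Λ t / t - a / 2 * Λ t`, and `Λ t / t` is a difference quotient of `Λ` at `0`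
  have hlim : Tendsto H (𝓝[>] 0) (𝓝 (Λ' 0)) := by
    have hd := hΛ 0 (left_mem_Icc.2 hs.le)
    have h2 : Tendsto Λ (𝓝[>] 0) (𝓝 (Λ 0)) :=
      hd.continuousAt.tendsto.mono_left nhdsWithin_le_nhds
    convert hd.tendsto_slope_zero_right.sub (h2.const_mul (a / 2)) using 2 with t
    · simp only [H, hΛ0, zero_add, sub_zero, smul_eq_mul]
      ring
    · simp [hΛ0]
  exact ge_of_tendsto hlim (by
    filter_upwards [Ioo_mem_nhdsGT hs] with t ht
    exact hanti ⟨ht.1, ht.2.le⟩ ⟨hs, le_rfl⟩ ht.2.le)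

section Herbst

variable {Ω : Type*} [MeasurableSpace Ω] {P : Measure Ω} {f : Ω → ℝ}

lemma ent_exp_mul_eq (t : ℝ) :
    ent P (fun ω => exp (t * f ω)) =
      t * ∫ ω, f ω * exp (t * f ω) ∂P - mgf f P t * cgf f P t := by
  simp only [ent, log_exp, cgf, mgf, ← integral_const_mul]
  congr 2
  ext ω
  ring

variable [IsProbabilityMeasure P]

lemma integrable_exp_mul_of_mem_Icc (hf : Measurable f) {c C : ℝ} (hfC : ∀ ω, f ω ∈ Icc c C)
    (t : ℝ) : Integrable (fun ω => exp (t * f ω)) P :=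
  integrable_comp_of_mem_compact (φ := fun x => exp (t * x)) (by fun_prop) hf isCompact_Icc hfC

lemma hasDerivAt_cgf_of_mem_Icc (hf : Measurable f) {c C : ℝ} (hfC : ∀ ω, f ω ∈ Icc c C)
    (t : ℝ) : HasDerivAt (cgf f P) ((∫ ω, f ω * exp (t * f ω) ∂P) / mgf f P t) t := by
  have h : integrableExpSet f P = univ :=
    eq_univ_of_forall fun t => integrable_exp_mul_of_mem_Icc hf hfC t
  have ht : t ∈ interior (integrableExpSet f P) := by simp [h]
  exact (hasDerivAt_mgf ht).log (mgf_pos (integrable_exp_mul_of_mem_Icc hf hfC t)).ne'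

theorem cgf_le_of_ent_exp_mul_le (hf : Measurable f) {c C : ℝ} (hfC : ∀ ω, f ω ∈ Icc c C)
    {a s : ℝ} (hs : 0 < s) (has : a * s < 2)
    (hent : ∀ t ∈ Ioo 0 s,
      ent P (fun ω => exp (t * f ω)) ≤ a * t ^ 2 / 2 * ∫ ω, f ω * exp (t * f ω) ∂P) :
    cgf f P s ≤ 2 * s * (∫ ω, f ω ∂P) / (2 - a * s) := by
  have hode : ∀ t ∈ Ioo 0 s, t * ((∫ ω, f ω * exp (t * f ω) ∂P) / mgf f P t) - cgf f P t ≤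
      a * t ^ 2 / 2 * ((∫ ω, f ω * exp (t * f ω) ∂P) / mgf f P t) := fun t ht => by
    have hM := mgf_pos (μ := P) (integrable_exp_mul_of_mem_Icc hf hfC t)
    have h := hent t ht
    rw [ent_exp_mul_eq] at h
    calc t * ((∫ ω, f ω * exp (t * f ω) ∂P) / mgf f P t) - cgf f P t
        = (t * ∫ ω, f ω * exp (t * f ω) ∂P - mgf f P t * cgf f P t) / mgf f P t := by
          field_simp
      _ ≤ (a * t ^ 2 / 2 * ∫ ω, f ω * exp (t * f ω) ∂P) / mgf f P t :=
          div_le_div_of_nonneg_right h hM.le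
      _ = a * t ^ 2 / 2 * ((∫ ω, f ω * exp (t * f ω) ∂P) / mgf f P t) := by ring
  have h := herbst_mul_inv_sub_le_deriv_zero hs (fun t _ => hasDerivAt_cgf_of_mem_Icc hf hfC t)
    cgf_zero hode
  simp only [zero_mul, exp_zero, mul_one, mgf_zero, div_one] at h
  rw [le_div_iff₀ (by linarith)]
  calc cgf f P s * (2 - a * s) = 2 * s * (cgf f P s * (s⁻¹ - a / 2)) := by field_simp
    _ ≤ 2 * s * ∫ ω, f ω ∂P := mul_le_mul_of_nonneg_left h (by positivity)

end Herbst

/-- Self-bounding concentration: if `Σ_k (f(x) − inf_y f(S_y^k x))² ≤ a·f(x)` for all `x`,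
then for `λ ∈ (0, 2/a)`, `ln E[exp(λ(f(X) − E[f(X')]))] ≤ λ²a·E[f(X)]/(2 − aλ)`. -/
theorem stmt_18 {𝒳 : Type*} [MeasurableSpace 𝒳] (μ : Measure 𝒳) [IsProbabilityMeasure μ]
    (n : ℕ) (f : (Fin n → 𝒳) → ℝ) (hf : Measurable f) (hnn : ∀ x, 0 ≤ f x)
    (a : ℝ) (ha : 0 < a)
    (hsb : ∀ x : Fin n → 𝒳,
      ∑ k : Fin n, (f x - ⨅ y : 𝒳, f (Function.update x k y)) ^ 2 ≤ a * f x)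
    (lam : ℝ) (hlam0 : 0 < lam) (hlam1 : lam < 2 / a) :
    Real.log (∫ x, Real.exp (lam * (f x
          - ∫ x', f x' ∂(Measure.pi fun _ : Fin n => μ)))
        ∂(Measure.pi fun _ : Fin n => μ))
      ≤ lam ^ 2 * a * (∫ x, f x ∂(Measure.pi fun _ : Fin n => μ)) / (2 - a * lam) := by
  set m := ∫ x, f x ∂(Measure.pi fun _ : Fin n => μ)
  have hlam : 0 < 2 - a * lam := by
    rw [lt_div_iff₀ ha] at hlam1
    linarith
  have := nonempty_of_isProbabilityMeasure (Measure.pi fun _ : Fin n => μ)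
  obtain ⟨B, hB⟩ := SelfBounding.bddAbove_range (f := f) (a := a) hsb hnn ha.le
  have hfB : ∀ x, f x ∈ Icc 0 B := fun x => ⟨hnn x, hB ⟨x, rfl⟩⟩
  have hcgf := cgf_le_of_ent_exp_mul_le hf hfB hlam0 (by linarith) fun t ht =>
    SelfBounding.ent_exp_mul_le (fun _ => μ) hsb hf hfB ht.1.le
  have hexp : ∫ x, exp (lam * (f x - m)) ∂(Measure.pi fun _ : Fin n => μ) =
      mgf f (Measure.pi fun _ : Fin n => μ) lam * exp (-(lam * m)) := by
    rw [mgf, ← integral_mul_const]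
    congr 1 with x
    rw [← exp_add]
    ring_nf
  rw [hexp, log_mul (mgf_pos (integrable_exp_mul_of_mem_Icc hf hfB lam)).ne' (exp_pos _).ne',
    log_exp]
  have hsplit : 2 * lam * m / (2 - a * lam) - lam * m = lam ^ 2 * a * m / (2 - a * lam) := by
    rw [eq_div_iff hlam.ne', sub_mul, div_mul_cancel₀ _ hlam.ne']
    ring
  change cgf f _ lam + -(lam * m) ≤ _
  linarith
end
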